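/- arXiv:2506.08937 — 3 statements merged into one kernel-verified Lean document; each statement's English description precedes it below -/
import Mathlib

section
/- Let ξ be standard Gaussian and ζ_h its truncation at level A_h = sqrt(2κ|ln h|) with κ ≥ 1, h ∈ (0,1). Then for every integer m ≥ 1, every p ≥ 1, and every ε ∈ (0, κ/p), there is a constant K (depending on p, m, ε, κ) such that (E|ξ^m - ζ_h^m|^p)^{1/p} ≤ K h^{κ/p - ε} for all h ∈ (0,1). -/
open MeasureTheory ProbabilityTheory Filter

/-- Truncation level `A_h = sqrt(2 κ |ln h|)`. -/
noncomputable def truncLevel (κ h : ℝ) : ℝ := Real.sqrt (2 * κ * |Real.log h|)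

/-- Truncation (clamp) of `x` to the interval `[-A_h, A_h]`. -/
noncomputable def trunc (κ h : ℝ) (x : ℝ) : ℝ :=
  max (-(truncLevel κ h)) (min (truncLevel κ h) x)

lemma aux_integrable {b r : ℝ} (hb : 0 < b) (hr : 0 ≤ r) :
    Integrable (fun x : ℝ => |x| ^ r * Real.exp (-b * x ^ 2)) := by
  refine Integrable.mono'
    ((integrable_exp_neg_mul_sq (show 0 < b / 2 by linarith)).const_mul
      (Real.exp (r ^ 2 / (2 * b)))) ?_ (Filter.Eventually.of_forall fun x => ?_)
  · exact ((continuous_abs.rpow_const fun x => Or.inr hr).mul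
      (Real.continuous_exp.comp (by continuity))).aestronglyMeasurable
  · rw [Real.norm_eq_abs, abs_of_nonneg (by positivity)]
    have h1 : |x| ^ r ≤ Real.exp (r * |x|) := by
      calc |x| ^ r ≤ (Real.exp |x|) ^ r :=
            Real.rpow_le_rpow (abs_nonneg x) (by linarith [Real.add_one_le_exp |x|]) hr
        _ = Real.exp (|x| * r) := (Real.exp_mul _ _).symm
        _ = Real.exp (r * |x|) := by rw [mul_comm]
    calc |x| ^ r * Real.exp (-b * x ^ 2)
        ≤ Real.exp (r * |x|) * Real.exp (-b * x ^ 2) :=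
          mul_le_mul_of_nonneg_right h1 (Real.exp_nonneg _)
      _ = Real.exp (r * |x| + -b * x ^ 2) := (Real.exp_add _ _).symm
      _ ≤ Real.exp (r ^ 2 / (2 * b) + -(b / 2) * x ^ 2) := by
          apply Real.exp_le_exp.mpr
          have hx2 : x ^ 2 = |x| ^ 2 := (sq_abs x).symm
          have hkey : 2 * b * (r * |x| + -b * x ^ 2) ≤ 2 * b * (r ^ 2 / (2 * b) + -(b / 2) * x ^ 2) := by
            have hrhs : 2 * b * (r ^ 2 / (2 * b) + -(b / 2) * x ^ 2) = r ^ 2 - b ^ 2 * x ^ 2 := by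
              field_simp
              ring
            rw [hrhs]
            nlinarith [sq_nonneg (b * |x| - r)]
          exact le_of_mul_le_mul_left hkey (by positivity)
      _ = Real.exp (r ^ 2 / (2 * b)) * Real.exp (-(b / 2) * x ^ 2) := Real.exp_add _ _

lemma gauss_integrable {r s : ℝ} (hr : 0 ≤ r) (hs : s < 1) :
    Integrable (fun x : ℝ => |x| ^ r * Real.exp (s * x ^ 2 / 2)) (gaussianReal 0 1) := by
  rw [gaussianReal_of_var_ne_zero 0 one_ne_zero,
    integrable_withDensity_iff (measurable_gaussianPDF 0 1)
      (Filter.Eventually.of_forall fun x => ENNReal.ofReal_lt_top)]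
  have hb : (0 : ℝ) < (1 - s) / 2 := by linarith
  have heq : ∀ x : ℝ, (Real.sqrt (2 * Real.pi))⁻¹ * (|x| ^ r * Real.exp (-((1 - s) / 2) * x ^ 2))
      = (|x| ^ r * Real.exp (s * x ^ 2 / 2)) * (gaussianPDF 0 1 x).toReal := by
    intro x
    rw [gaussianPDF, ENNReal.toReal_ofReal (gaussianPDFReal_nonneg _ _ _), gaussianPDFReal]
    push_cast
    rw [show (-((1 - s) / 2) * x ^ 2) = s * x ^ 2 / 2 + -((x - 0) ^ 2 / (2 * 1)) by ring,
      Real.exp_add, mul_one]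
    ring
  exact ((aux_integrable hb hr).const_mul _).congr (Filter.Eventually.of_forall heq)

lemma key_aux {p s : ℝ} (hp : 1 ≤ p) (hs : 0 ≤ s) {A : ℝ} (hA : 0 ≤ A) (m : ℕ) (x : ℝ) :
    |x ^ m - (max (-A) (min A x)) ^ m| ^ p
      ≤ (2 ^ p * Real.exp (-(s * A ^ 2) / 2)) * (|x| ^ ((m : ℝ) * p) * Real.exp (s * x ^ 2 / 2)) := by
  rcases le_or_gt |x| A with hxA | hxA
  · have hx : max (-A) (min A x) = x := by
      rcases abs_le.mp hxA with ⟨h1, h2⟩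
      rw [min_eq_right h2, max_eq_right h1]
    rw [hx, sub_self, abs_zero, Real.zero_rpow (by positivity)]
    positivity
  · have ht : |max (-A) (min A x)| ≤ A := by
      rw [abs_le]
      constructor
      · exact le_max_left _ _
      · exact max_le (by linarith) (min_le_left _ _)
    have htx : |max (-A) (min A x)| ≤ |x| := le_trans ht hxA.le
    have h2 : |x ^ m - (max (-A) (min A x)) ^ m| ≤ 2 * |x| ^ m := by
      calc |x ^ m - (max (-A) (min A x)) ^ m| ≤ |x ^ m| + |(max (-A) (min A x)) ^ m| :=
            abs_sub _ _
        _ = |x| ^ m + |max (-A) (min A x)| ^ m := by rw [abs_pow, abs_pow]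
        _ ≤ |x| ^ m + |x| ^ m := by
            gcongr
        _ = 2 * |x| ^ m := by ring
    have h3 : |x ^ m - (max (-A) (min A x)) ^ m| ^ p ≤ (2 * |x| ^ m) ^ p :=
      Real.rpow_le_rpow (abs_nonneg _) h2 (by linarith)
    have h4 : (2 * |x| ^ m : ℝ) ^ p = 2 ^ p * |x| ^ ((m : ℝ) * p) := by
      rw [Real.mul_rpow (by norm_num) (by positivity), ← Real.rpow_natCast |x| m,
        ← Real.rpow_mul (abs_nonneg x)]
    have h5 : (1 : ℝ) ≤ Real.exp (-(s * A ^ 2) / 2) * Real.exp (s * x ^ 2 / 2) := by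
      rw [← Real.exp_add]
      apply Real.one_le_exp
      have hx2 : A ^ 2 ≤ x ^ 2 := by
        rw [← sq_abs x]
        nlinarith
      nlinarith
    calc |x ^ m - (max (-A) (min A x)) ^ m| ^ p ≤ 2 ^ p * |x| ^ ((m : ℝ) * p) := by
          rw [← h4]; exact h3
      _ = (2 ^ p * |x| ^ ((m : ℝ) * p)) * 1 := by ring
      _ ≤ (2 ^ p * |x| ^ ((m : ℝ) * p)) *
            (Real.exp (-(s * A ^ 2) / 2) * Real.exp (s * x ^ 2 / 2)) := by
          apply mul_le_mul_of_nonneg_left h5 (by positivity)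
      _ = (2 ^ p * Real.exp (-(s * A ^ 2) / 2)) * (|x| ^ ((m : ℝ) * p) * Real.exp (s * x ^ 2 / 2)) := by
          ring

/-- For a standard Gaussian `ξ` and its truncation `ζ_h` at level `A_h = sqrt(2κ|ln h|)`
(with `κ ≥ 1`), for every integer `m ≥ 1`, every `p ≥ 1` and every `ε ∈ (0, κ/p)`,
there is `K` such that `(E|ξ^m - ζ_h^m|^p)^{1/p} ≤ K h^{κ/p - ε}` for all `h ∈ (0,1)`. -/
theorem stmt_1 {Ω : Type*} [MeasurableSpace Ω] (P : Measure Ω) [IsProbabilityMeasure P]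
    (ξ : Ω → ℝ) (hξmeas : Measurable ξ)
    (hξ : Measure.map ξ P = ProbabilityTheory.gaussianReal 0 1)
    (κ : ℝ) (hκ : 1 ≤ κ) (m : ℕ) (hm : 1 ≤ m) (p : ℝ) (hp : 1 ≤ p)
    (ε : ℝ) (hε : ε ∈ Set.Ioo 0 (κ / p)) :
    ∃ K > 0, ∀ h ∈ Set.Ioo (0 : ℝ) 1,
      (∫ ω, |ξ ω ^ m - trunc κ h (ξ ω) ^ m| ^ p ∂P) ^ (1 / p) ≤ K * h ^ (κ / p - ε) := by
  obtain ⟨hε0, hεκ⟩ := hε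
  have hp0 : (0 : ℝ) < p := by linarith
  have hκ0 : (0 : ℝ) < κ := by linarith
  set s : ℝ := 1 - ε * p / κ with hs_def
  have hεp : ε * p < κ := (lt_div_iff₀ hp0).mp hεκ
  have hs1 : s < 1 := by
    have : 0 < ε * p / κ := by positivity
    simp only [hs_def]; linarith
  have hs0 : 0 < s := by
    have : ε * p / κ < 1 := (div_lt_one hκ0).mpr hεp
    simp only [hs_def]; linarith
  have hsκ : s * κ = κ - ε * p := by
    rw [hs_def]
    field_simp
  -- the constant
  set G : ℝ → ℝ := fun x => |x| ^ ((m : ℝ) * p) * Real.exp (s * x ^ 2 / 2) with hG_def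
  have hGcont : Continuous G := by
    apply Continuous.mul
    · exact continuous_abs.rpow_const fun x => Or.inr (by positivity)
    · exact Real.continuous_exp.comp (by continuity)
  have hGgauss : Integrable G (gaussianReal 0 1) := gauss_integrable (by positivity) hs1
  have hGP : Integrable (fun ω => G (ξ ω)) P := by
    have := (integrable_map_measure hGcont.aestronglyMeasurable hξmeas.aemeasurable).mp
      (by rw [hξ]; exact hGgauss)
    exact this
  set C : ℝ := ∫ ω, G (ξ ω) ∂P with hC_def
  have hC0 : 0 ≤ C := integral_nonneg fun ω => by simp only [hG_def]; positivity
  refine ⟨(2 ^ p * (C + 1)) ^ (1 / p), Real.rpow_pos_of_pos (by positivity) _, ?_⟩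
  rintro h ⟨hh0, hh1⟩
  set A : ℝ := truncLevel κ h with hA_def
  have hA0 : 0 ≤ A := Real.sqrt_nonneg _
  have hA2 : A ^ 2 = -(2 * κ * Real.log h) := by
    rw [hA_def, truncLevel, Real.sq_sqrt (by positivity), abs_of_neg (Real.log_neg hh0 hh1)]
    ring
  have hexp : Real.exp (-(s * A ^ 2) / 2) = h ^ (κ - ε * p) := by
    rw [hA2, Real.rpow_def_of_pos hh0]
    congr 1
    rw [← hsκ]
    ring
  have key : ∀ ω, |ξ ω ^ m - trunc κ h (ξ ω) ^ m| ^ p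
      ≤ (2 ^ p * Real.exp (-(s * A ^ 2) / 2)) * G (ξ ω) := by
    intro ω
    exact key_aux hp hs0.le hA0 m (ξ ω)
  have h1 : ∫ ω, |ξ ω ^ m - trunc κ h (ξ ω) ^ m| ^ p ∂P
      ≤ ∫ ω, (2 ^ p * Real.exp (-(s * A ^ 2) / 2)) * G (ξ ω) ∂P :=
    integral_mono_of_nonneg (Filter.Eventually.of_forall fun ω => by positivity)
      (hGP.const_mul _) (Filter.Eventually.of_forall key)
  have h2 : ∫ ω, (2 ^ p * Real.exp (-(s * A ^ 2) / 2)) * G (ξ ω) ∂P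
      = (2 ^ p * Real.exp (-(s * A ^ 2) / 2)) * C := by
    rw [hC_def, integral_const_mul]
  have h3 : ∫ ω, |ξ ω ^ m - trunc κ h (ξ ω) ^ m| ^ p ∂P
      ≤ 2 ^ p * (C + 1) * h ^ (κ - ε * p) := by
    rw [h2, hexp] at h1
    have hh : (0:ℝ) ≤ h ^ (κ - ε * p) := Real.rpow_nonneg hh0.le _
    calc ∫ ω, |ξ ω ^ m - trunc κ h (ξ ω) ^ m| ^ p ∂P ≤ 2 ^ p * h ^ (κ - ε * p) * C := h1
      _ ≤ 2 ^ p * (C + 1) * h ^ (κ - ε * p) := by nlinarith [Real.rpow_pos_of_pos (show (0:ℝ)<2 by norm_num) p]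
  have hint0 : 0 ≤ ∫ ω, |ξ ω ^ m - trunc κ h (ξ ω) ^ m| ^ p ∂P :=
    integral_nonneg fun ω => by positivity
  calc (∫ ω, |ξ ω ^ m - trunc κ h (ξ ω) ^ m| ^ p ∂P) ^ (1 / p)
      ≤ (2 ^ p * (C + 1) * h ^ (κ - ε * p)) ^ (1 / p) :=
        Real.rpow_le_rpow hint0 h3 (by positivity)
    _ = (2 ^ p * (C + 1)) ^ (1 / p) * h ^ (κ / p - ε) := by
        rw [Real.mul_rpow (by positivity) (Real.rpow_nonneg hh0.le _),
          ← Real.rpow_mul hh0.le]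
        congr 1
        field_simp
end

section
/- Let ξ be standard Gaussian and ζ_h its truncation at level A_h = sqrt(2κ|ln h|) with κ ≥ 1, h ∈ (0,1). Then for every integer m ≥ 1 and every ε ∈ (0, κ), there is a constant K (depending on m, ε, κ) such that |E(ξ^m - ζ_h^m)| ≤ K h^{κ - ε} for all h ∈ (0,1). -/
open MeasureTheory ProbabilityTheory Filter

private lemma abs_pow_le (m : ℕ) (x : ℝ) : |x| ^ m ≤ 1 + x ^ (2 * m) := by
  have h1 : x ^ (2 * m) = (|x| ^ m) ^ 2 := by
    rw [← abs_pow]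
    rw [pow_mul, ← pow_mul, mul_comm 2 m, pow_mul, sq_abs]
  set t := |x| ^ m with ht
  have htnn : 0 ≤ t := pow_nonneg (abs_nonneg x) m
  rw [h1]
  nlinarith

/-- For a standard Gaussian `ξ` and its truncation `ζ_h` at level `A_h = sqrt(2κ|ln h|)`
(with `κ ≥ 1`), for every integer `m ≥ 1` and every `ε ∈ (0, κ)`, there is `K` such that
`|E(ξ^m - ζ_h^m)| ≤ K h^{κ - ε}` for all `h ∈ (0,1)`. -/
theorem stmt_2 {Ω : Type*} [MeasurableSpace Ω] (P : Measure Ω) [IsProbabilityMeasure P]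
    (ξ : Ω → ℝ) (hξmeas : Measurable ξ)
    (hξ : Measure.map ξ P = ProbabilityTheory.gaussianReal 0 1)
    (κ : ℝ) (hκ : 1 ≤ κ) (m : ℕ) (hm : 1 ≤ m)
    (ε : ℝ) (hε : ε ∈ Set.Ioo 0 κ) :
    ∃ K > 0, ∀ h ∈ Set.Ioo (0 : ℝ) 1,
      |∫ ω, (ξ ω ^ m - trunc κ h (ξ ω) ^ m) ∂P| ≤ K * h ^ (κ - ε) := by
  obtain ⟨hε0, hεκ⟩ := hε
  have hκ0 : (0:ℝ) < κ := lt_of_lt_of_le one_pos hκ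
  set δ : ℝ := (κ - ε) / κ with hδ
  have hδ0 : 0 < δ := div_pos (by linarith) hκ0
  have hδ1 : δ < 1 := (div_lt_one hκ0).mpr (by linarith)
  have hδκ : δ * κ = κ - ε := div_mul_cancel₀ _ hκ0.ne'
  set b : ℝ := (1 - δ) / 2 with hb
  have hb0 : 0 < b := by rw [hb]; linarith
  set g : ℝ → ℝ := fun x => |x| ^ m * Real.exp (δ * x ^ 2 / 2) with hg
  have hgnn : ∀ x, 0 ≤ g x := fun x => by positivity
  have hgmeas : Measurable g := by
    apply Measurable.mul
    · exact (measurable_abs).pow_const m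
    · exact Real.measurable_exp.comp (by fun_prop)
  -- integrability of g under the gaussian
  have hgint : Integrable g (gaussianReal 0 1) := by
    rw [gaussianReal_of_var_ne_zero 0 one_ne_zero,
      integrable_withDensity_iff (measurable_gaussianPDF 0 1)
        (ae_of_all _ fun x => ENNReal.ofReal_lt_top)]
    have hB : Integrable (fun x : ℝ => Real.exp (-b * x ^ 2) +
        x ^ (2 * m) * Real.exp (-b * x ^ 2)) volume := by
      apply Integrable.add
      · exact integrable_exp_neg_mul_sq hb0
      · have := integrable_rpow_mul_exp_neg_mul_sq hb0
          (show (-1 : ℝ) < ((2 * m : ℕ) : ℝ) from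
            lt_of_lt_of_le neg_one_lt_zero (Nat.cast_nonneg _))
        have heq : (fun x : ℝ => x ^ (((2 * m : ℕ)) : ℝ) * Real.exp (-b * x ^ 2)) =
            fun x : ℝ => x ^ (2 * m) * Real.exp (-b * x ^ 2) := by
          funext x; rw [Real.rpow_natCast]
        rwa [heq] at this
    apply hB.mono'
    · apply AEStronglyMeasurable.mul hgmeas.aestronglyMeasurable
      exact (measurable_gaussianPDF 0 1).ennreal_toReal.aestronglyMeasurable
    · refine ae_of_all _ fun x => ?_
      have hpdf : (gaussianPDF 0 1 x).toReal = gaussianPDFReal 0 1 x := by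
        rw [gaussianPDF_def, ENNReal.toReal_ofReal (gaussianPDFReal_nonneg 0 1 x)]
      have hpdfval : gaussianPDFReal 0 1 x =
          (Real.sqrt (2 * Real.pi))⁻¹ * Real.exp (-x ^ 2 / 2) := by
        simp [gaussianPDFReal, neg_div]
      have hc : (Real.sqrt (2 * Real.pi))⁻¹ ≤ 1 := by
        rw [inv_le_one_iff₀]
        right
        rw [show (1:ℝ) = Real.sqrt 1 by simp]
        exact Real.sqrt_le_sqrt (by nlinarith [Real.pi_gt_three])
      have hexp : Real.exp (δ * x ^ 2 / 2) * Real.exp (-x ^ 2 / 2) =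
          Real.exp (-b * x ^ 2) := by
        rw [← Real.exp_add]; congr 1; rw [hb]; ring
      have hnn : 0 ≤ g x * (gaussianPDF 0 1 x).toReal := by
        apply mul_nonneg (hgnn x) ENNReal.toReal_nonneg
      rw [Real.norm_eq_abs, abs_of_nonneg hnn, hpdf, hpdfval]
      calc g x * ((Real.sqrt (2 * Real.pi))⁻¹ * Real.exp (-x ^ 2 / 2))
          ≤ g x * (1 * Real.exp (-x ^ 2 / 2)) := by
            apply mul_le_mul_of_nonneg_left _ (hgnn x)
            apply mul_le_mul_of_nonneg_right hc (Real.exp_nonneg _)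
        _ = |x| ^ m * Real.exp (-b * x ^ 2) := by
            rw [one_mul, hg]; dsimp only; rw [mul_assoc, hexp]
        _ ≤ (1 + x ^ (2 * m)) * Real.exp (-b * x ^ 2) := by
            apply mul_le_mul_of_nonneg_right (abs_pow_le m x) (Real.exp_nonneg _)
        _ = Real.exp (-b * x ^ 2) + x ^ (2 * m) * Real.exp (-b * x ^ 2) := by ring
  -- transport to P
  have hgintP : Integrable (fun ω => g (ξ ω)) P := by
    have := (integrable_map_measure hgmeas.aestronglyMeasurable
      hξmeas.aemeasurable).mp (hξ ▸ hgint)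
    exact this
  have hintval : ∫ ω, g (ξ ω) ∂P = ∫ x, g x ∂(gaussianReal 0 1) := by
    rw [← hξ, integral_map hξmeas.aemeasurable hgmeas.aestronglyMeasurable]
  set I : ℝ := ∫ x, g x ∂(gaussianReal 0 1) with hI
  have hInn : 0 ≤ I := integral_nonneg hgnn
  refine ⟨2 * I + 1, by linarith, fun h hh => ?_⟩
  obtain ⟨hh0, hh1⟩ := hh
  have hrnn : (0:ℝ) ≤ h ^ (κ - ε) := Real.rpow_nonneg hh0.le _
  -- key pointwise bound
  set A : ℝ := truncLevel κ h with hA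
  have hA0 : 0 ≤ A := Real.sqrt_nonneg _
  have hA2 : A ^ 2 = 2 * κ * |Real.log h| := by
    rw [hA, truncLevel, Real.sq_sqrt (by positivity)]
  have hlog : |Real.log h| = -Real.log h := abs_of_neg (Real.log_neg hh0 hh1)
  have hexpA : Real.exp (-(δ * A ^ 2 / 2)) = h ^ (κ - ε) := by
    rw [Real.rpow_def_of_pos hh0, hA2, hlog]
    congr 1
    have hδ' : δ = (κ - ε) / κ := hδ
    rw [hδ']
    field_simp
  have hkey : ∀ x : ℝ, |x ^ m - trunc κ h x ^ m| ≤ 2 * h ^ (κ - ε) * g x := by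
    intro x
    by_cases hx : |x| ≤ A
    · have htr : trunc κ h x = x := by
        rw [trunc, ← hA]
        rw [abs_le] at hx
        rw [min_eq_right hx.2, max_eq_right hx.1]
      rw [htr, sub_self, abs_zero]
      positivity
    · push_neg at hx
      have htr : |trunc κ h x| ≤ A := by
        rw [trunc, ← hA, abs_le]
        constructor
        · exact le_max_left _ _
        · exact max_le (by linarith) (min_le_left _ _)
      have h1 : |x ^ m - trunc κ h x ^ m| ≤ 2 * |x| ^ m := by
        calc |x ^ m - trunc κ h x ^ m| ≤ |x ^ m| + |trunc κ h x ^ m| := abs_sub _ _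
          _ = |x| ^ m + |trunc κ h x| ^ m := by rw [abs_pow, abs_pow]
          _ ≤ |x| ^ m + |x| ^ m := by
              have := pow_le_pow_left₀ (abs_nonneg _) (htr.trans hx.le) m
              linarith
          _ = 2 * |x| ^ m := by ring
      have hx2 : A ^ 2 ≤ x ^ 2 := by
        rw [← sq_abs x]
        exact pow_le_pow_left₀ hA0 hx.le 2
      have h2 : (1:ℝ) ≤ h ^ (κ - ε) * Real.exp (δ * x ^ 2 / 2) := by
        rw [← hexpA, ← Real.exp_add]
        rw [show (1:ℝ) = Real.exp 0 by simp]
        apply Real.exp_le_exp.mpr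
        nlinarith
      calc |x ^ m - trunc κ h x ^ m| ≤ 2 * |x| ^ m := h1
        _ = 2 * |x| ^ m * 1 := by ring
        _ ≤ 2 * |x| ^ m * (h ^ (κ - ε) * Real.exp (δ * x ^ 2 / 2)) := by
            apply mul_le_mul_of_nonneg_left h2 (by positivity)
        _ = 2 * h ^ (κ - ε) * g x := by rw [hg]; ring
  -- conclude
  calc |∫ ω, (ξ ω ^ m - trunc κ h (ξ ω) ^ m) ∂P|
      ≤ ∫ ω, |ξ ω ^ m - trunc κ h (ξ ω) ^ m| ∂P := by
        simpa [Real.norm_eq_abs] using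
          norm_integral_le_integral_norm (μ := P) (fun ω => ξ ω ^ m - trunc κ h (ξ ω) ^ m)
    _ ≤ ∫ ω, 2 * h ^ (κ - ε) * g (ξ ω) ∂P := by
        apply integral_mono_of_nonneg (ae_of_all _ fun ω => abs_nonneg _)
          ((hgintP.const_mul _))
        exact ae_of_all _ fun ω => hkey (ξ ω)
    _ = 2 * h ^ (κ - ε) * ∫ ω, g (ξ ω) ∂P := integral_const_mul _ _
    _ = 2 * h ^ (κ - ε) * I := by rw [hintval]
    _ ≤ (2 * I + 1) * h ^ (κ - ε) := by nlinarith
end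

section
/- Let f, g : ℝ^d → ℝ^d be Lipschitz continuous. Fix s₀ ∈ ℕ, matrices A, B ∈ ℝ^{s₀×s₀}. Then there exists h₁ > 0 and C₀ > 0 such that for all h ∈ (0, h₁], all y ∈ ℝ^d, and all w ∈ ℝ with h + |w| ≤ h₁ + sqrt(h₁ · 2κ|ln h₁|): the fixed point equation Z = (e ⊗ I_d) y + h (A ⊗ I_d) F(Z) + w (B ⊗ I_d) G(Z) has a unique solution Z = (Z₁,…,Z_{s₀}) ∈ ℝ^{s₀ d}, and moreover |Z_i - y| ≤ C₀ (1 + |y|)(h + |w|) for each i. -/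
open MeasureTheory Filter

set_option maxHeartbeats 1000000

/-- Solvability of the implicit stage equations of the stochastic Runge–Kutta method:
for Lipschitz `f, g` and any tableau matrices `A, B`, there are `h₁ > 0` and `C₀ > 0`
such that for every step-size `h ∈ (0, h₁]`, every `y` and every (truncated) increment `w`
with `h + |w| ≤ h₁ + sqrt(h₁ · 2κ|ln h₁|)`, the fixed-point system
`Zᵢ = y + h ∑ⱼ aᵢⱼ f(Zⱼ) + w ∑ⱼ bᵢⱼ g(Zⱼ)` has a unique solution, and every solution
satisfies `|Zᵢ - y| ≤ C₀ (1 + |y|)(h + |w|)`. -/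
theorem stmt_6 {d s₀ : ℕ}
    (f g : EuclideanSpace ℝ (Fin d) → EuclideanSpace ℝ (Fin d))
    (Kf Kg : NNReal) (hf : LipschitzWith Kf f) (hg : LipschitzWith Kg g)
    (A B : Matrix (Fin s₀) (Fin s₀) ℝ) (κ : ℝ) (hκ : 1 ≤ κ) :
    ∃ h₁ > (0 : ℝ), ∃ C₀ > (0 : ℝ), ∀ h ∈ Set.Ioc (0 : ℝ) h₁,
      ∀ y : EuclideanSpace ℝ (Fin d), ∀ w : ℝ,
        h + |w| ≤ h₁ + Real.sqrt (h₁ * (2 * κ * |Real.log h₁|)) →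
        (∃! Z : Fin s₀ → EuclideanSpace ℝ (Fin d),
          ∀ i, Z i = y + h • (∑ j, A i j • f (Z j)) + w • (∑ j, B i j • g (Z j))) ∧
        (∀ Z : Fin s₀ → EuclideanSpace ℝ (Fin d),
          (∀ i, Z i = y + h • (∑ j, A i j • f (Z j)) + w • (∑ j, B i j • g (Z j))) →
          ∀ i, ‖Z i - y‖ ≤ C₀ * (1 + ‖y‖) * (h + |w|)) := by
  classical
  have hκ0 : (0:ℝ) < κ := lt_of_lt_of_le one_pos hκ
  set MA : ℝ := (∑ i, ∑ j, |A i j|) + 1 with hMAdef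
  set MB : ℝ := (∑ i, ∑ j, |B i j|) + 1 with hMBdef
  have hMA0 : 0 < MA := by positivity
  have hMB0 : 0 < MB := by positivity
  have hMArow : ∀ i, ∑ j, |A i j| ≤ MA := by
    intro i
    have : ∑ j, |A i j| ≤ ∑ i, ∑ j, |A i j| :=
      Finset.single_le_sum (f := fun i => ∑ j, |A i j|)
        (fun i _ => by positivity) (Finset.mem_univ i)
    linarith
  have hMBrow : ∀ i, ∑ j, |B i j| ≤ MB := by
    intro i
    have : ∑ j, |B i j| ≤ ∑ i, ∑ j, |B i j| :=
      Finset.single_le_sum (f := fun i => ∑ j, |B i j|)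
        (fun i _ => by positivity) (Finset.mem_univ i)
    linarith
  set K₁ : ℝ := MA * (Kf : ℝ) + MB * (Kg : ℝ) + 1 with hK₁def
  have hK₁ : 0 < K₁ := by positivity
  set ε : ℝ := 1 / (2 * K₁) with hεdef
  have hε : 0 < ε := by positivity
  have hsq : (0:ℝ) ≤ Real.sqrt κ := Real.sqrt_nonneg κ
  set q : ℝ := ε / (1 + 2 * Real.sqrt κ) with hqdef
  have hq : 0 < q := by positivity
  set h₁ : ℝ := min 1 (q ^ 4) with hh₁def
  have hh₁ : 0 < h₁ := lt_min one_pos (by positivity)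
  have hh₁le1 : h₁ ≤ 1 := min_le_left _ _
  have hh₁leq4 : h₁ ≤ q ^ 4 := min_le_right _ _
  have hq6 : (1 + 2 * Real.sqrt κ) * q = ε := by
    rw [hqdef]; field_simp
  clear_value MA MB K₁ ε q h₁
  -- key smallness bound
  have hbound : h₁ + Real.sqrt (h₁ * (2 * κ * |Real.log h₁|)) ≤ ε := by
    have hlog : |Real.log h₁| ≤ 2 / Real.sqrt h₁ := by
      have h1 : Real.log (1 / h₁) ≤ 2 * Real.sqrt (1 / h₁) := by
        have := Real.log_le_sub_one_of_pos (x := Real.sqrt (1 / h₁))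
          (Real.sqrt_pos.2 (by positivity))
        have hls : Real.log (Real.sqrt (1 / h₁)) = Real.log (1 / h₁) / 2 :=
          Real.log_sqrt (by positivity)
        nlinarith [Real.sqrt_nonneg (1 / h₁)]
      have habs : |Real.log h₁| = Real.log (1 / h₁) := by
        rw [abs_of_nonpos (Real.log_nonpos hh₁.le hh₁le1), Real.log_div one_ne_zero hh₁.ne',
          Real.log_one]
        ring
      rw [habs]
      calc Real.log (1 / h₁) ≤ 2 * Real.sqrt (1 / h₁) := h1
        _ = 2 / Real.sqrt h₁ := by
            rw [Real.sqrt_div' 1 hh₁.le, Real.sqrt_one]; ring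
    have hsqrtpos : 0 < Real.sqrt h₁ := Real.sqrt_pos.2 hh₁
    have h2 : h₁ * (2 * κ * |Real.log h₁|) ≤ 4 * κ * Real.sqrt h₁ := by
      have : h₁ * (2 * κ * |Real.log h₁|) ≤ h₁ * (2 * κ * (2 / Real.sqrt h₁)) := by
        have : 2 * κ * |Real.log h₁| ≤ 2 * κ * (2 / Real.sqrt h₁) := by
          apply mul_le_mul_of_nonneg_left hlog (by positivity)
        exact mul_le_mul_of_nonneg_left this hh₁.le
      calc h₁ * (2 * κ * |Real.log h₁|) ≤ h₁ * (2 * κ * (2 / Real.sqrt h₁)) := this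
        _ = 4 * κ * (h₁ / Real.sqrt h₁) := by ring
        _ = 4 * κ * Real.sqrt h₁ := by rw [Real.div_sqrt]
    have h3 : Real.sqrt (h₁ * (2 * κ * |Real.log h₁|)) ≤
        2 * Real.sqrt κ * Real.sqrt (Real.sqrt h₁) := by
      calc Real.sqrt (h₁ * (2 * κ * |Real.log h₁|)) ≤ Real.sqrt (4 * κ * Real.sqrt h₁) :=
            Real.sqrt_le_sqrt h2
        _ = Real.sqrt 4 * Real.sqrt κ * Real.sqrt (Real.sqrt h₁) := by
            rw [Real.sqrt_mul (by positivity), Real.sqrt_mul (by norm_num)]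
        _ = 2 * Real.sqrt κ * Real.sqrt (Real.sqrt h₁) := by
            rw [show (4:ℝ) = 2^2 by norm_num, Real.sqrt_sq (by norm_num : (0:ℝ) ≤ 2)]
    have h4 : h₁ ≤ Real.sqrt (Real.sqrt h₁) := by
      have ha : h₁ ≤ Real.sqrt h₁ := by
        nlinarith [Real.sq_sqrt hh₁.le, Real.sqrt_nonneg h₁]
      have hb : Real.sqrt h₁ ≤ Real.sqrt (Real.sqrt h₁) := by
        have : Real.sqrt h₁ ≤ 1 := by
          rw [show (1:ℝ) = Real.sqrt 1 by simp]; exact Real.sqrt_le_sqrt hh₁le1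
        nlinarith [Real.sq_sqrt (Real.sqrt_nonneg h₁), Real.sqrt_nonneg (Real.sqrt h₁)]
      linarith
    have h5 : Real.sqrt (Real.sqrt h₁) ≤ q := by
      have : Real.sqrt h₁ ≤ q ^ 2 := by
        calc Real.sqrt h₁ ≤ Real.sqrt (q ^ 4) := Real.sqrt_le_sqrt hh₁leq4
          _ = q ^ 2 := by
              rw [show q ^ 4 = (q ^ 2) ^ 2 by ring, Real.sqrt_sq (by positivity)]
      calc Real.sqrt (Real.sqrt h₁) ≤ Real.sqrt (q ^ 2) := Real.sqrt_le_sqrt this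
        _ = q := Real.sqrt_sq hq.le
    calc h₁ + Real.sqrt (h₁ * (2 * κ * |Real.log h₁|))
        ≤ Real.sqrt (Real.sqrt h₁) + 2 * Real.sqrt κ * Real.sqrt (Real.sqrt h₁) := by
          linarith
      _ = (1 + 2 * Real.sqrt κ) * Real.sqrt (Real.sqrt h₁) := by ring
      _ ≤ (1 + 2 * Real.sqrt κ) * q := by
          apply mul_le_mul_of_nonneg_left h5 (by positivity)
      _ = ε := hq6
  set a : ℝ := MA * (‖f 0‖ + (Kf : ℝ)) + MB * (‖g 0‖ + (Kg : ℝ)) + 1 with hadef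
  have ha0 : 0 < a := by positivity
  clear_value a
  refine ⟨h₁, hh₁, 2 * a, by linarith, ?_⟩
  rintro h ⟨hh0, hhle⟩ y w hw
  have hwtot : h + |w| ≤ ε := le_trans hw hbound
  have hwK : (h + |w|) * K₁ ≤ 1 / 2 := by
    have := mul_le_mul_of_nonneg_right hwtot hK₁.le
    rw [hεdef] at this
    calc (h + |w|) * K₁ ≤ 1 / (2 * K₁) * K₁ := this
      _ = 1 / 2 := by
          rw [div_mul_eq_mul_div, one_mul, mul_comm,
            div_eq_div_iff (by positivity : K₁ * 2 ≠ 0) (by norm_num : (2:ℝ) ≠ 0)]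
          ring
  have hwpos : 0 < h + |w| := by positivity
  set Φ : (Fin s₀ → EuclideanSpace ℝ (Fin d)) → (Fin s₀ → EuclideanSpace ℝ (Fin d)) :=
    fun Z i => y + h • (∑ j, A i j • f (Z j)) + w • (∑ j, B i j • g (Z j)) with hΦdef
  -- Lipschitz estimate for Φ
  have key : ∀ Z Z', dist (Φ Z) (Φ Z') ≤ ((h + |w|) * K₁) * dist Z Z' := by
    intro Z Z'
    rcases Nat.eq_zero_or_pos s₀ with hs | hs
    · have : Z = Z' := by funext i; exact absurd i.2 (by omega)
      simp [this]
    apply dist_pi_le_iff (by positivity) |>.2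
    intro i
    have hcoord : ∀ j, dist (Z j) (Z' j) ≤ dist Z Z' := fun j => dist_le_pi_dist Z Z' j
    have hdist0 : (0:ℝ) ≤ dist Z Z' := dist_nonneg
    rw [dist_eq_norm]
    have heq : Φ Z i - Φ Z' i =
        h • (∑ j, A i j • (f (Z j) - f (Z' j))) + w • (∑ j, B i j • (g (Z j) - g (Z' j))) := by
      simp only [hΦdef, smul_sub, Finset.sum_sub_distrib, smul_sub]
      abel
    rw [heq]
    have hA : ‖∑ j, A i j • (f (Z j) - f (Z' j))‖ ≤ MA * (Kf : ℝ) * dist Z Z' := by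
      calc ‖∑ j, A i j • (f (Z j) - f (Z' j))‖ ≤ ∑ j, ‖A i j • (f (Z j) - f (Z' j))‖ :=
            norm_sum_le _ _
        _ ≤ ∑ j, |A i j| * ((Kf : ℝ) * dist Z Z') := by
            apply Finset.sum_le_sum
            intro j _
            rw [norm_smul, Real.norm_eq_abs]
            apply mul_le_mul_of_nonneg_left _ (abs_nonneg _)
            calc ‖f (Z j) - f (Z' j)‖ = dist (f (Z j)) (f (Z' j)) := (dist_eq_norm _ _).symm
              _ ≤ (Kf : ℝ) * dist (Z j) (Z' j) := hf.dist_le_mul _ _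
              _ ≤ (Kf : ℝ) * dist Z Z' := by
                  apply mul_le_mul_of_nonneg_left (hcoord j) (Kf.coe_nonneg)
        _ = (∑ j, |A i j|) * ((Kf : ℝ) * dist Z Z') := by rw [Finset.sum_mul]
        _ ≤ MA * ((Kf : ℝ) * dist Z Z') := by
            apply mul_le_mul_of_nonneg_right (hMArow i) (by positivity)
        _ = MA * (Kf : ℝ) * dist Z Z' := by ring
    have hB : ‖∑ j, B i j • (g (Z j) - g (Z' j))‖ ≤ MB * (Kg : ℝ) * dist Z Z' := by
      calc ‖∑ j, B i j • (g (Z j) - g (Z' j))‖ ≤ ∑ j, ‖B i j • (g (Z j) - g (Z' j))‖ :=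
            norm_sum_le _ _
        _ ≤ ∑ j, |B i j| * ((Kg : ℝ) * dist Z Z') := by
            apply Finset.sum_le_sum
            intro j _
            rw [norm_smul, Real.norm_eq_abs]
            apply mul_le_mul_of_nonneg_left _ (abs_nonneg _)
            calc ‖g (Z j) - g (Z' j)‖ = dist (g (Z j)) (g (Z' j)) := (dist_eq_norm _ _).symm
              _ ≤ (Kg : ℝ) * dist (Z j) (Z' j) := hg.dist_le_mul _ _
              _ ≤ (Kg : ℝ) * dist Z Z' := by
                  apply mul_le_mul_of_nonneg_left (hcoord j) (Kg.coe_nonneg)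
        _ = (∑ j, |B i j|) * ((Kg : ℝ) * dist Z Z') := by rw [Finset.sum_mul]
        _ ≤ MB * ((Kg : ℝ) * dist Z Z') := by
            apply mul_le_mul_of_nonneg_right (hMBrow i) (by positivity)
        _ = MB * (Kg : ℝ) * dist Z Z' := by ring
    calc ‖h • (∑ j, A i j • (f (Z j) - f (Z' j))) + w • (∑ j, B i j • (g (Z j) - g (Z' j)))‖
        ≤ ‖h • (∑ j, A i j • (f (Z j) - f (Z' j)))‖ +
          ‖w • (∑ j, B i j • (g (Z j) - g (Z' j)))‖ := norm_add_le _ _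
      _ = |h| * ‖∑ j, A i j • (f (Z j) - f (Z' j))‖ +
          |w| * ‖∑ j, B i j • (g (Z j) - g (Z' j))‖ := by
            rw [norm_smul, norm_smul, Real.norm_eq_abs, Real.norm_eq_abs]
      _ ≤ h * (MA * (Kf : ℝ) * dist Z Z') + |w| * (MB * (Kg : ℝ) * dist Z Z') := by
            rw [abs_of_pos hh0]
            gcongr
      _ ≤ h * (K₁ * dist Z Z') + |w| * (K₁ * dist Z Z') := by
            have eA : MA * (Kf:ℝ) * dist Z Z' ≤ K₁ * dist Z Z' :=
              mul_le_mul_of_nonneg_right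
                (by rw [hK₁def]; nlinarith [mul_nonneg hMB0.le Kg.coe_nonneg]) hdist0
            have eB : MB * (Kg:ℝ) * dist Z Z' ≤ K₁ * dist Z Z' :=
              mul_le_mul_of_nonneg_right
                (by rw [hK₁def]; nlinarith [mul_nonneg hMA0.le Kf.coe_nonneg]) hdist0
            exact add_le_add (mul_le_mul_of_nonneg_left eA hh0.le)
              (mul_le_mul_of_nonneg_left eB (abs_nonneg w))
      _ = ((h + |w|) * K₁) * dist Z Z' := by ring
  -- Φ is a contraction
  have hcnn : (0:ℝ) ≤ (h + |w|) * K₁ := by positivity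
  set c : NNReal := ⟨(h + |w|) * K₁, hcnn⟩ with hcdef
  have hclt : c < 1 := by
    rw [← NNReal.coe_lt_coe]
    show (h + |w|) * K₁ < (1:ℝ)
    linarith
  have hlip : LipschitzWith c Φ := LipschitzWith.of_dist_le_mul key
  have hcontr : ContractingWith c Φ := ⟨hclt, hlip⟩
  have hfixiff : ∀ Z, (∀ i, Z i = y + h • (∑ j, A i j • f (Z j)) + w • (∑ j, B i j • g (Z j)))
      ↔ Function.IsFixedPt Φ Z := by
    intro Z
    constructor
    · intro hZ; funext i; exact (hZ i).symm
    · intro hZ i; exact (congrFun hZ i).symm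
  constructor
  · refine ⟨ContractingWith.fixedPoint Φ hcontr, ?_, ?_⟩
    · exact (hfixiff _).2 hcontr.fixedPoint_isFixedPt
    · intro Z hZ
      exact hcontr.fixedPoint_unique ((hfixiff Z).1 hZ)
  · intro Z hZ i
    set D : ℝ := dist Z (fun _ => y) with hDdef
    have hD0 : (0:ℝ) ≤ D := dist_nonneg
    have hcoord : ∀ j, dist (Z j) y ≤ D := fun j => dist_le_pi_dist Z (fun _ => y) j
    have hDle : D ≤ (h + |w|) * (a * (1 + ‖y‖)) + (1/2) * D := by
      apply dist_pi_le_iff (by positivity) |>.2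
      intro i
      have hfy : ∀ j, ‖f (Z j)‖ ≤ ‖f 0‖ + (Kf : ℝ) * ‖y‖ + (Kf : ℝ) * D := by
        intro j
        have h1 : ‖f (Z j) - f 0‖ ≤ (Kf : ℝ) * ‖Z j - 0‖ := by
          have := hf.dist_le_mul (Z j) 0
          rwa [dist_eq_norm, dist_eq_norm] at this
        have h2 : ‖Z j - 0‖ ≤ ‖y‖ + D := by
          have e1 : ‖Z j - y‖ ≤ D := by rw [← dist_eq_norm]; exact hcoord j
          have e2 : ‖Z j‖ ≤ ‖Z j - y‖ + ‖y‖ := by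
            calc ‖Z j‖ = ‖(Z j - y) + y‖ := by rw [sub_add_cancel]
              _ ≤ ‖Z j - y‖ + ‖y‖ := norm_add_le _ _
          rw [sub_zero]; linarith
        calc ‖f (Z j)‖ = ‖f 0 + (f (Z j) - f 0)‖ := by rw [add_sub_cancel]
          _ ≤ ‖f 0‖ + ‖f (Z j) - f 0‖ := norm_add_le _ _
          _ ≤ ‖f 0‖ + (Kf : ℝ) * (‖y‖ + D) := by
              have := le_trans h1 (mul_le_mul_of_nonneg_left h2 Kf.coe_nonneg)
              linarith
          _ = ‖f 0‖ + (Kf : ℝ) * ‖y‖ + (Kf : ℝ) * D := by ring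
      have hgy : ∀ j, ‖g (Z j)‖ ≤ ‖g 0‖ + (Kg : ℝ) * ‖y‖ + (Kg : ℝ) * D := by
        intro j
        have h1 : ‖g (Z j) - g 0‖ ≤ (Kg : ℝ) * ‖Z j - 0‖ := by
          have := hg.dist_le_mul (Z j) 0
          rwa [dist_eq_norm, dist_eq_norm] at this
        have h2 : ‖Z j - 0‖ ≤ ‖y‖ + D := by
          have e1 : ‖Z j - y‖ ≤ D := by rw [← dist_eq_norm]; exact hcoord j
          have e2 : ‖Z j‖ ≤ ‖Z j - y‖ + ‖y‖ := by
            calc ‖Z j‖ = ‖(Z j - y) + y‖ := by rw [sub_add_cancel]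
              _ ≤ ‖Z j - y‖ + ‖y‖ := norm_add_le _ _
          rw [sub_zero]; linarith
        calc ‖g (Z j)‖ = ‖g 0 + (g (Z j) - g 0)‖ := by rw [add_sub_cancel]
          _ ≤ ‖g 0‖ + ‖g (Z j) - g 0‖ := norm_add_le _ _
          _ ≤ ‖g 0‖ + (Kg : ℝ) * (‖y‖ + D) := by
              have := le_trans h1 (mul_le_mul_of_nonneg_left h2 Kg.coe_nonneg)
              linarith
          _ = ‖g 0‖ + (Kg : ℝ) * ‖y‖ + (Kg : ℝ) * D := by ring
      have heq : Z i - y = h • (∑ j, A i j • f (Z j)) + w • (∑ j, B i j • g (Z j)) := by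
        rw [hZ i]; abel
      rw [dist_eq_norm, heq]
      have hA : ‖∑ j, A i j • f (Z j)‖ ≤ MA * (‖f 0‖ + (Kf : ℝ) * ‖y‖ + (Kf : ℝ) * D) := by
        calc ‖∑ j, A i j • f (Z j)‖ ≤ ∑ j, ‖A i j • f (Z j)‖ := norm_sum_le _ _
          _ ≤ ∑ j, |A i j| * (‖f 0‖ + (Kf : ℝ) * ‖y‖ + (Kf : ℝ) * D) := by
              apply Finset.sum_le_sum
              intro j _
              rw [norm_smul, Real.norm_eq_abs]
              exact mul_le_mul_of_nonneg_left (hfy j) (abs_nonneg _)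
          _ = (∑ j, |A i j|) * (‖f 0‖ + (Kf : ℝ) * ‖y‖ + (Kf : ℝ) * D) := by
              rw [Finset.sum_mul]
          _ ≤ MA * (‖f 0‖ + (Kf : ℝ) * ‖y‖ + (Kf : ℝ) * D) := by
              apply mul_le_mul_of_nonneg_right (hMArow i) (by positivity)
      have hB : ‖∑ j, B i j • g (Z j)‖ ≤ MB * (‖g 0‖ + (Kg : ℝ) * ‖y‖ + (Kg : ℝ) * D) := by
        calc ‖∑ j, B i j • g (Z j)‖ ≤ ∑ j, ‖B i j • g (Z j)‖ := norm_sum_le _ _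
          _ ≤ ∑ j, |B i j| * (‖g 0‖ + (Kg : ℝ) * ‖y‖ + (Kg : ℝ) * D) := by
              apply Finset.sum_le_sum
              intro j _
              rw [norm_smul, Real.norm_eq_abs]
              exact mul_le_mul_of_nonneg_left (hgy j) (abs_nonneg _)
          _ = (∑ j, |B i j|) * (‖g 0‖ + (Kg : ℝ) * ‖y‖ + (Kg : ℝ) * D) := by
              rw [Finset.sum_mul]
          _ ≤ MB * (‖g 0‖ + (Kg : ℝ) * ‖y‖ + (Kg : ℝ) * D) := by
              apply mul_le_mul_of_nonneg_right (hMBrow i) (by positivity)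
      have hnorm : ‖h • (∑ j, A i j • f (Z j)) + w • (∑ j, B i j • g (Z j))‖ ≤
          h * (MA * (‖f 0‖ + (Kf : ℝ) * ‖y‖ + (Kf : ℝ) * D)) +
          |w| * (MB * (‖g 0‖ + (Kg : ℝ) * ‖y‖ + (Kg : ℝ) * D)) := by
        calc ‖h • (∑ j, A i j • f (Z j)) + w • (∑ j, B i j • g (Z j))‖
            ≤ ‖h • (∑ j, A i j • f (Z j))‖ + ‖w • (∑ j, B i j • g (Z j))‖ := norm_add_le _ _
          _ = |h| * ‖∑ j, A i j • f (Z j)‖ + |w| * ‖∑ j, B i j • g (Z j)‖ := by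
              rw [norm_smul, norm_smul, Real.norm_eq_abs, Real.norm_eq_abs]
          _ ≤ h * (MA * (‖f 0‖ + (Kf : ℝ) * ‖y‖ + (Kf : ℝ) * D)) +
              |w| * (MB * (‖g 0‖ + (Kg : ℝ) * ‖y‖ + (Kg : ℝ) * D)) := by
              rw [abs_of_pos hh0]; gcongr
      refine le_trans hnorm ?_
      have hy0 : (0:ℝ) ≤ ‖y‖ := norm_nonneg y
      have hf0 : (0:ℝ) ≤ ‖f 0‖ := norm_nonneg _
      have hg0 : (0:ℝ) ≤ ‖g 0‖ := norm_nonneg _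
      have hKD : (h + |w|) * ((MA * (Kf:ℝ) + MB * (Kg:ℝ)) * D) ≤ (1/2) * D := by
        have h1 : (h + |w|) * (MA * (Kf:ℝ) + MB * (Kg:ℝ)) ≤ (h + |w|) * K₁ :=
          mul_le_mul_of_nonneg_left (by rw [hK₁def]; linarith) hwpos.le
        have h2 : (h + |w|) * (MA * (Kf:ℝ) + MB * (Kg:ℝ)) * D ≤ ((h + |w|) * K₁) * D :=
          mul_le_mul_of_nonneg_right h1 hD0
        have h3 : ((h + |w|) * K₁) * D ≤ (1/2) * D := mul_le_mul_of_nonneg_right hwK hD0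
        calc (h + |w|) * ((MA * (Kf:ℝ) + MB * (Kg:ℝ)) * D)
            = (h + |w|) * (MA * (Kf:ℝ) + MB * (Kg:ℝ)) * D := by ring
          _ ≤ (1/2) * D := le_trans h2 h3
      have hconst : (h + |w|) * (MA * (‖f 0‖ + (Kf:ℝ) * ‖y‖) +
          MB * (‖g 0‖ + (Kg:ℝ) * ‖y‖)) ≤ (h + |w|) * (a * (1 + ‖y‖)) := by
        apply mul_le_mul_of_nonneg_left _ hwpos.le
        have haK : MA * (Kf:ℝ) + MB * (Kg:ℝ) ≤ a := by
          rw [hadef]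
          nlinarith [mul_nonneg hMA0.le (norm_nonneg (f 0)),
            mul_nonneg hMB0.le (norm_nonneg (g 0))]
        have p1 : (MA * (Kf:ℝ) + MB * (Kg:ℝ)) * ‖y‖ ≤ a * ‖y‖ :=
          mul_le_mul_of_nonneg_right haK (norm_nonneg y)
        have p2 : MA * ‖f 0‖ + MB * ‖g 0‖ ≤ a := by
          rw [hadef]
          nlinarith [mul_nonneg hMA0.le Kf.coe_nonneg, mul_nonneg hMB0.le Kg.coe_nonneg]
        nlinarith [p1, p2]
      have habsw : (0:ℝ) ≤ |w| := abs_nonneg w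
      have hXf : (0:ℝ) ≤ MA * (‖f 0‖ + (Kf:ℝ) * ‖y‖ + (Kf:ℝ) * D) := by positivity
      have hXg : (0:ℝ) ≤ MB * (‖g 0‖ + (Kg:ℝ) * ‖y‖ + (Kg:ℝ) * D) := by positivity
      have t1 : h * (MA * (‖f 0‖ + (Kf:ℝ) * ‖y‖ + (Kf:ℝ) * D)) ≤
          (h + |w|) * (MA * (‖f 0‖ + (Kf:ℝ) * ‖y‖ + (Kf:ℝ) * D)) :=
        mul_le_mul_of_nonneg_right (by linarith) hXf
      have t2 : |w| * (MB * (‖g 0‖ + (Kg:ℝ) * ‖y‖ + (Kg:ℝ) * D)) ≤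
          (h + |w|) * (MB * (‖g 0‖ + (Kg:ℝ) * ‖y‖ + (Kg:ℝ) * D)) :=
        mul_le_mul_of_nonneg_right (by linarith) hXg
      have t3 : (h + |w|) * (MA * (‖f 0‖ + (Kf:ℝ) * ‖y‖ + (Kf:ℝ) * D)) +
          (h + |w|) * (MB * (‖g 0‖ + (Kg:ℝ) * ‖y‖ + (Kg:ℝ) * D)) =
          (h + |w|) * (MA * (‖f 0‖ + (Kf:ℝ) * ‖y‖) + MB * (‖g 0‖ + (Kg:ℝ) * ‖y‖)) +
          (h + |w|) * ((MA * (Kf:ℝ) + MB * (Kg:ℝ)) * D) := by ring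
      linarith [t1, t2, hconst, hKD]
    have hfin : D ≤ 2 * a * (1 + ‖y‖) * (h + |w|) := by
      have e : 2 * a * (1 + ‖y‖) * (h + |w|) = 2 * ((h + |w|) * (a * (1 + ‖y‖))) := by ring
      rw [e]; linarith
    calc ‖Z i - y‖ = dist (Z i) y := (dist_eq_norm _ _).symm
      _ ≤ D := hcoord i
      _ ≤ 2 * a * (1 + ‖y‖) * (h + |w|) := hfin
end
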